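/- If Q is a quiver with order-2 automorphism τ and O is a τ-orbit of size 1 (a fixed node k), then the group mutation at O is just the ordinary mutation μ_k, and μ_k(B) is again τ-invariant. -/
import Mathlib


/-- Quiver mutation at node `k`, encoded on skew-symmetric integer matrices. -/
def qMut {n : ℕ} (B : Matrix (Fin n) (Fin n) ℤ) (k : Fin n) : Matrix (Fin n) (Fin n) ℤ :=
  fun i j => if i = k ∨ j = k then -B i j
    else B i j + (|B i k| * B k j + B i k * |B k j|) / 2

/-- Group mutation at the `τ`-orbit of a node `k`. -/
def groupMut {n : ℕ} (τ : Equiv.Perm (Fin n))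
    (B : Matrix (Fin n) (Fin n) ℤ) (k : Fin n) : Matrix (Fin n) (Fin n) ℤ :=
  if τ k = k then qMut B k else qMut (qMut B k) (τ k)

/-- For an order-2 automorphism `τ` and a `τ`-fixed node `k` (orbit of size 1), the
group mutation at the orbit `{k}` is just the ordinary mutation `μ_k`, and `μ_k(B)`
is again `τ`-invariant. -/
theorem fixed_node_group_mutation {n : ℕ} (B : Matrix (Fin n) (Fin n) ℤ)
    (τ : Equiv.Perm (Fin n))
    (hskew : ∀ i j, B j i = -B i j)
    (haut : ∀ i j, B (τ i) (τ j) = B i j)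
    (hord2 : ∀ i, τ (τ i) = i)
    (k : Fin n) (hk : τ k = k) :
    groupMut τ B k = qMut B k ∧
    (∀ i j, (qMut B k) (τ i) (τ j) = (qMut B k) i j) := by
  constructor
  · simp [groupMut, hk]
  · intro i j
    have hik : τ i = k ↔ i = k := by
      constructor
      · intro h; have := τ.injective (h.trans hk.symm); exact this
      · intro h; rw [h, hk]
    have hjk : τ j = k ↔ j = k := by
      constructor
      · intro h; have := τ.injective (h.trans hk.symm); exact this
      · intro h; rw [h, hk]
    simp only [qMut, hik, hjk]
    by_cases h : i = k ∨ j = k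
    · simp [h, haut]
    · simp only [h, if_neg h, haut]
      rw [show B (τ i) k = B i k by conv_lhs => rw [← hk, haut],
          show B k (τ j) = B k j by conv_lhs => rw [← hk, haut]]
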